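/- arXiv:1412.4151 — 5 statements merged into one kernel-verified Lean document; each statement's English description precedes it below -/
import Mathlib

section
/- Let V be a real topological vector space, H a real Hilbert space, j : V → H linear, and E : V → ℝ ∪ {+∞} a functional. If E is convex, then the j-subgradient ∂_j E, defined as the set of pairs (u,f) ∈ H × H such that there exists û ∈ D(E) with j(û) = u and liminf_{t→0⁺} (E(û+tv̂) − E(û))/t ≥ ⟨f, j(v̂)⟩ for all v̂ ∈ V, is cyclically monotone: for every finite sequence (u₀,f₀),…,(uₙ,fₙ) in ∂_j E with (u₀,f₀) = (uₙ,fₙ), one has Σ_{i=1}^n ⟨fᵢ, uᵢ − u_{i−1}⟩ ≥ 0. -/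
open Filter Topology

variable {V : Type*} [AddCommGroup V] [Module ℝ V] [TopologicalSpace V]
variable {H : Type*} [NormedAddCommGroup H] [InnerProductSpace ℝ H] [CompleteSpace H]

/-- The `j`-subgradient of a functional `E : V → ℝ ∪ {+∞}`. -/
def jSubgradient (j : V →ₗ[ℝ] H) (E : V → EReal) : Set (H × H) :=
  {p | ∃ u : V, E u < ⊤ ∧ j u = p.1 ∧ ∀ v : V,
    ((inner ℝ p.2 (j v) : ℝ) : EReal) ≤
      liminf (fun t : ℝ => (E (u + t • v) - E u) * ((t⁻¹ : ℝ) : EReal)) (𝓝[>] (0 : ℝ))}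

/-- Convexity of an extended real valued functional. -/
def ERealConvex (E : V → EReal) : Prop :=
  ∀ u v : V, ∀ t : ℝ, 0 ≤ t → t ≤ 1 →
    E (t • u + (1 - t) • v) ≤ (t : EReal) * E u + ((1 - t : ℝ) : EReal) * E v


/-!
Convexity bounds the difference quotient `(E (û + t • v̂) - E û) / t` for `t ∈ (0, 1]` by its value
at `t = 1`, so the `liminf` condition in `∂_j E` upgrades to the global inequality
`E v̂ ≥ E û + ⟪f, j v̂ - u⟫`, with `E û` finite. Evaluating the inequality for `(uᵢ₊₁, fᵢ₊₁)` at the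
witness of `uᵢ` and summing around the cycle, the values `E ûᵢ` telescope away.
-/

theorem EReal.sub_mul_inv_le_sub_of_le {A X : EReal} {c t : ℝ} (ht : 0 < t)
    (h : A ≤ t * X + ((1 - t : ℝ) : EReal) * c) : (A - c) * ((t⁻¹ : ℝ) : EReal) ≤ X - c := by
  induction A using EReal.rec with
  | bot => simp [EReal.bot_mul_coe_of_pos (inv_pos.2 ht)]
  | top =>
    induction X using EReal.rec with
    | top => simp
    | bot => simp [EReal.mul_bot_of_pos (EReal.coe_pos.2 ht)] at h
    | coe x => exact absurd h (by exact_mod_cast (EReal.coe_lt_top _).not_ge)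
  | coe a =>
    induction X using EReal.rec with
    | top => simp
    | bot => simp [EReal.mul_bot_of_pos (EReal.coe_pos.2 ht)] at h
    | coe x =>
      have h' : a ≤ t * x + (1 - t) * c := by exact_mod_cast h
      rw [← EReal.coe_sub, ← EReal.coe_mul, ← EReal.coe_sub, EReal.coe_le_coe_iff,
        ← div_eq_mul_inv, div_le_iff₀ ht]
      linarith

omit [TopologicalSpace V] in
theorem ERealConvex.sub_mul_inv_le_sub {E : V → EReal} (hconv : ERealConvex E) {w : V} {c : ℝ}
    (hw : E w = c) (v : V) {t : ℝ} (ht₀ : 0 < t) (ht₁ : t ≤ 1) :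
    (E (w + t • v) - E w) * ((t⁻¹ : ℝ) : EReal) ≤ E (w + v) - E w := by
  have h := hconv (w + v) w t ht₀.le ht₁
  rw [show t • (w + v) + (1 - t) • w = w + t • v by module] at h
  rw [hw] at h ⊢
  exact EReal.sub_mul_inv_le_sub_of_le ht₀ h

theorem EReal.ne_bot_of_coe_le_liminf_sub_mul_inv {a : EReal} {r : ℝ}
    (h : (r : EReal) ≤ liminf (fun t : ℝ => (a - a) * ((t⁻¹ : ℝ) : EReal)) (𝓝[>] (0 : ℝ))) :
    a ≠ ⊥ := by
  rintro rfl
  have : liminf (fun t : ℝ => (⊥ - ⊥ : EReal) * ((t⁻¹ : ℝ) : EReal)) (𝓝[>] (0 : ℝ)) ≤ ⊥ := by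
    refine liminf_le_of_frequently_le (Eventually.frequently ?_)
    filter_upwards [self_mem_nhdsWithin] with t ht
    rw [EReal.bot_sub, EReal.bot_mul_coe_of_pos (inv_pos.2 ht)]
  exact EReal.coe_ne_bot r (le_bot_iff.1 (h.trans this))

omit [TopologicalSpace V] in
theorem ERealConvex.le_sub_of_le_liminf {E : V → EReal} (hconv : ERealConvex E) {w : V} {c : ℝ}
    (hw : E w = c) {v : V} {b : EReal}
    (h : b ≤ liminf (fun t : ℝ => (E (w + t • v) - E w) * ((t⁻¹ : ℝ) : EReal)) (𝓝[>] (0 : ℝ))) :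
    b ≤ E (w + v) - E w := by
  refine h.trans (liminf_le_of_frequently_le (Eventually.frequently ?_))
  filter_upwards [Ioc_mem_nhdsGT one_pos] with t ht
  exact hconv.sub_mul_inv_le_sub hw v ht.1 ht.2

omit [TopologicalSpace V] [CompleteSpace H] in
theorem ERealConvex.exists_affine_minorant_of_mem_jSubgradient {j : V →ₗ[ℝ] H} {E : V → EReal}
    (hconv : ERealConvex E) {x g : H} (h : (x, g) ∈ jSubgradient j E) :
    ∃ w : V, ∃ a : ℝ, E w = a ∧ j w = x ∧ ∀ v, ((a + inner ℝ g (j v - x) : ℝ) : EReal) ≤ E v := by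
  obtain ⟨w, hw_top, rfl, hsub⟩ := h
  have hw_bot : E w ≠ ⊥ :=
    EReal.ne_bot_of_coe_le_liminf_sub_mul_inv (by simpa only [smul_zero, add_zero] using hsub 0)
  obtain ⟨a, ha⟩ : ∃ a : ℝ, E w = a := ⟨_, (EReal.coe_toReal hw_top.ne hw_bot).symm⟩
  refine ⟨w, a, ha, rfl, fun v => ?_⟩
  have := hconv.le_sub_of_le_liminf ha (hsub (v - w))
  rw [add_sub_cancel, map_sub] at this
  rw [EReal.coe_add, add_comm, ← ha]
  exact EReal.add_le_of_le_sub this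

theorem jSubgradient_cyclicallyMonotone_general (j : V →ₗ[ℝ] H) (E : V → EReal)
    (hconv : ERealConvex E)
    (n : ℕ) (u f : ℕ → H)
    (hmem : ∀ i ≤ n, (u i, f i) ∈ jSubgradient j E)
    (hcyc : u 0 = u n ∧ f 0 = f n) :
    0 ≤ ∑ i ∈ Finset.range n, (inner ℝ (f (i + 1)) (u (i + 1) - u i) : ℝ) := by
  choose! w a hwa hwu hmin using fun i (hi : i ≤ n) =>
    hconv.exists_affine_minorant_of_mem_jSubgradient (hmem i hi)
  -- `u 0 = u n` does not force the witnesses at `0` and `n` to agree, so reuse the one at `n`.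
  set w' := Function.update w 0 (w n)
  set a' := Function.update a 0 (a n)
  have hw' : ∀ i ≤ n, E (w' i) = a' i ∧ j (w' i) = u i := by
    intro i hi
    rcases eq_or_ne i 0 with rfl | hi₀
    · simp only [w', a', Function.update_self]
      exact ⟨hwa n le_rfl, (hwu n le_rfl).trans hcyc.1.symm⟩
    · simp only [w', a', Function.update_of_ne hi₀]
      exact ⟨hwa i hi, hwu i hi⟩
  have hstep : ∀ i ∈ Finset.range n, a' (i + 1) - a' i ≤ inner ℝ (f (i + 1)) (u (i + 1) - u i) := by
    intro i hi
    obtain ⟨hE, hj⟩ := hw' i (Finset.mem_range_le hi)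
    have h := hmin (i + 1) (Finset.mem_range.1 hi) (w' i)
    rw [hE, hj, EReal.coe_le_coe_iff] at h
    simp only [a', Function.update_of_ne i.succ_ne_zero, inner_sub_right] at h ⊢
    linarith
  have hperiodic : a' n = a' 0 := by
    rcases eq_or_ne n 0 with h | h
    · rw [h]
    · simp [a', Function.update_of_ne h]
  calc (0 : ℝ) = a' n - a' 0 := by rw [hperiodic, sub_self]
    _ = ∑ i ∈ Finset.range n, (a' (i + 1) - a' i) := (Finset.sum_range_sub a' n).symm
    _ ≤ _ := Finset.sum_le_sum hstep

/-- if `E` is convex, then the `j`-subgradient is cyclically monotone. -/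
theorem jSubgradient_cyclicallyMonotone (j : V →ₗ[ℝ] H) (E : V → EReal)
    (hproper : ∃ u, E u < ⊤) (hconv : ERealConvex E)
    (n : ℕ) (u f : ℕ → H)
    (hmem : ∀ i ≤ n, (u i, f i) ∈ jSubgradient j E)
    (hcyc : u 0 = u n ∧ f 0 = f n) :
    0 ≤ ∑ i ∈ Finset.range n, (inner ℝ (f (i + 1)) (u (i + 1) - u i) : ℝ) :=
  jSubgradient_cyclicallyMonotone_general j E hconv n u f hmem hcyc
end

section
/- Let E : V → ℝ ∪ {+∞} be Gâteaux differentiable with derivative E'. Then (u,f) ∈ ∂_j E if and only if there exists û ∈ D(E) with j(û) = u and E'(û)(v̂) = ⟨f, j(v̂)⟩ for every v̂ ∈ V. -/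
open Filter Topology

variable {V : Type*} [AddCommGroup V] [Module ℝ V] [TopologicalSpace V]
variable {H : Type*} [NormedAddCommGroup H] [InnerProductSpace ℝ H] [CompleteSpace H]

theorem LinearMap.eq_of_forall_le {R M N : Type*} [Semiring R] [AddCommGroup M] [Module R M]
    [AddCommGroup N] [PartialOrder N] [IsOrderedAddMonoid N] [Module R N] {f g : M →ₗ[R] N}
    (h : ∀ x, f x ≤ g x) : f = g :=
  LinearMap.ext fun x => le_antisymm (h x) <| by simpa using h (-x)

theorem jSubgradient_eq_gateaux_general (j : V →ₗ[ℝ] H) (E : V → EReal)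
    (E' : V → V →ₗ[ℝ] ℝ)
    (hdiff : ∀ u : V, E u < ⊤ → ∀ v : V,
      Tendsto (fun t : ℝ => (E (u + t • v) - E u) * ((t⁻¹ : ℝ) : EReal)) (𝓝[>] (0 : ℝ))
        (𝓝 ((E' u v : ℝ) : EReal)))
    (p : H × H) :
    p ∈ jSubgradient j E ↔
      ∃ u : V, E u < ⊤ ∧ j u = p.1 ∧ ∀ v : V, E' u v = (inner ℝ p.2 (j v) : ℝ) := by
  refine exists_congr fun u => and_congr_right fun hu => and_congr_right fun _ => ?_
  simp only [(hdiff u hu _).liminf_eq, EReal.coe_le_coe_iff]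
  constructor
  · intro hle v
    exact (LinearMap.congr_fun (LinearMap.eq_of_forall_le (f := innerₛₗ ℝ p.2 ∘ₗ j) hle) v).symm
  · exact fun heq v => (heq v).ge

/-- if `E` is Gâteaux differentiable with derivative `E'` (in the sense that the
one-sided difference quotients converge to the linear functional `E'(û)` at each point of the
effective domain), then `(u,f) ∈ ∂_j E` iff there exists `û ∈ D(E)` with `j(û) = u` and
`E'(û)(v̂) = ⟨f, j(v̂)⟩` for every `v̂ ∈ V`. -/
theorem jSubgradient_eq_gateaux (j : V →ₗ[ℝ] H) (hj : Continuous j) (E : V → EReal)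
    (E' : V → V →ₗ[ℝ] ℝ)
    (hdiff : ∀ u : V, E u < ⊤ → ∀ v : V,
      Tendsto (fun t : ℝ => (E (u + t • v) - E u) * ((t⁻¹ : ℝ) : EReal)) (𝓝[>] (0 : ℝ))
        (𝓝 ((E' u v : ℝ) : EReal)))
    (p : H × H) :
    p ∈ jSubgradient j E ↔
      ∃ u : V, E u < ⊤ ∧ j u = p.1 ∧ ∀ v : V, E' u v = (inner ℝ p.2 (j v) : ℝ) :=
  jSubgradient_eq_gateaux_general j E E' hdiff p
end

section
/- Assume E is j-semiconvex. Then for every u ∈ D(∂_j E) and every elliptic extension û ∈ Ê_u one has E(û) = inf { E(v̂) : v̂ ∈ V, j(v̂) = u }. In particular E is constant on Ê_u. -/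
open Filter Topology

variable {V : Type*} [AddCommGroup V] [Module ℝ V] [TopologicalSpace V]
variable {H : Type*} [NormedAddCommGroup H] [InnerProductSpace ℝ H] [CompleteSpace H]

noncomputable def shifted (j : V →ₗ[ℝ] H) (E : V → EReal) (ω : ℝ) (u : V) : EReal :=
  E u + ((ω / 2 * ‖j u‖ ^ 2 : ℝ) : EReal)

def ellipticExt (j : V →ₗ[ℝ] H) (E : V → EReal) (u : H) : Set V :=
  {uh | E uh < ⊤ ∧ j uh = u ∧ ∀ vh ∈ LinearMap.ker j,
    (0 : EReal) ≤ liminf (fun t : ℝ => (E (uh + t • vh) - E uh) * ((t⁻¹ : ℝ) : EReal))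
      (𝓝[>] (0 : ℝ))}

/-!
Inside the fibre `j⁻¹(u)` the quadratic term `ω/2 ‖j ·‖²` is the constant `ω/2 ‖u‖²`, so
semiconvexity makes `E` genuinely convex on the fibre. For `v̂` in the fibre, convexity along the
segment from `û` to `v̂` bounds every difference quotient of `E` at `û` in the direction
`v̂ - û ∈ ker j` by the secant slope `E(v̂) - E(û)`; ellipticity says the lower limit of these
quotients is nonnegative, hence `E(û) ≤ E(v̂)`.
-/

theorem ERealConvex.le_convexComb_of_map_eq {V : Type*} [AddCommGroup V] [Module ℝ V]
    {H : Type*} [NormedAddCommGroup H] [InnerProductSpace ℝ H]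
    {j : V →ₗ[ℝ] H} {E : V → EReal} {ω : ℝ} (hconv : ERealConvex (shifted j E ω))
    {x y : V} (hxy : j x = j y) {t : ℝ} (ht₀ : 0 ≤ t) (ht₁ : t ≤ 1) :
    E (t • x + (1 - t) • y) ≤ t * E x + ((1 - t : ℝ) : EReal) * E y := by
  have hj : j (t • x + (1 - t) • y) = j y := by
    rw [map_add, map_smul, map_smul, hxy, ← add_smul, add_sub_cancel, one_smul]
  have h := hconv x y t ht₀ ht₁
  simp only [shifted, hj, hxy] at h
  set c : ℝ := ω / 2 * ‖j y‖ ^ 2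
  have hsplit : (t : EReal) * (E x + c) + ((1 - t : ℝ) : EReal) * (E y + c) =
      (t * E x + ((1 - t : ℝ) : EReal) * E y) + c := by
    rw [EReal.left_distrib_of_nonneg_of_ne_top (EReal.coe_nonneg.2 ht₀) (EReal.coe_ne_top _),
      EReal.left_distrib_of_nonneg_of_ne_top (EReal.coe_nonneg.2 (sub_nonneg.2 ht₁))
        (EReal.coe_ne_top _), add_add_add_comm, ← EReal.coe_mul, ← EReal.coe_mul,
      ← EReal.coe_add, ← add_mul, add_sub_cancel, one_mul]
  rw [hsplit] at h
  simpa only [EReal.add_sub_cancel_right] using EReal.sub_le_sub h (le_refl (c : EReal))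

theorem EReal.sub_mul_inv_le_sub_of_le_convexComb {x a : EReal} {r t : ℝ} (ht : 0 < t)
    (hx : x ≤ t * a + ((1 - t : ℝ) : EReal) * r) :
    (x - r) * ((t⁻¹ : ℝ) : EReal) ≤ a - r := by
  have hcomb : (t : EReal) * a + ((1 - t : ℝ) : EReal) * r - r = t * (a - r) := by
    induction a using EReal.rec with
    | bot => simp [EReal.coe_mul_bot_of_pos ht]
    | coe a => norm_cast; ring
    | top =>
      rw [EReal.coe_mul_top_of_pos ht, ← EReal.coe_mul, EReal.top_add_coe, EReal.top_sub_coe,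
        EReal.coe_mul_top_of_pos ht]
  calc (x - r) * ((t⁻¹ : ℝ) : EReal)
      ≤ (t * (a - r)) * ((t⁻¹ : ℝ) : EReal) :=
        mul_le_mul_of_nonneg_right (hcomb ▸ EReal.sub_le_sub hx le_rfl)
          (EReal.coe_nonneg.2 (inv_nonneg.2 ht.le))
    _ = a - r := by
        rw [mul_comm, ← mul_assoc, ← EReal.coe_mul, inv_mul_cancel₀ ht.ne', EReal.coe_one, one_mul]

theorem le_add_of_le_convexComb_of_liminf_slope_nonneg {M : Type*} [AddCommGroup M] [Module ℝ M]
    {E : M → EReal} {x w : M} (hx : E x ≠ ⊤)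
    (hseg : ∀ t ∈ Set.Ioo (0 : ℝ) 1,
      E (x + t • w) ≤ t * E (x + w) + ((1 - t : ℝ) : EReal) * E x)
    (hslope : 0 ≤ liminf (fun t : ℝ => (E (x + t • w) - E x) * ((t⁻¹ : ℝ) : EReal))
      (𝓝[>] (0 : ℝ))) :
    E x ≤ E (x + w) := by
  rcases eq_bot_or_bot_lt (E x) with hbot | hbot
  · simp [hbot]
  lift E x to ℝ using ⟨hx, hbot.ne'⟩ with r
  have hsecant : liminf (fun t : ℝ => (E (x + t • w) - r) * ((t⁻¹ : ℝ) : EReal))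
      (𝓝[>] (0 : ℝ)) ≤ E (x + w) - r := by
    refine liminf_le_of_frequently_le' (Eventually.frequently ?_)
    filter_upwards [Ioo_mem_nhdsGT one_pos] with t ht
    exact EReal.sub_mul_inv_le_sub_of_le_convexComb ht.1 (hseg t ht)
  exact (EReal.sub_nonneg (.inr (EReal.coe_ne_top r)) (.inr (EReal.coe_ne_bot r))).1
    (hslope.trans hsecant)

theorem le_of_mem_ellipticExt {V : Type*} [AddCommGroup V] [Module ℝ V]
    {H : Type*} [NormedAddCommGroup H] [InnerProductSpace ℝ H]
    {j : V →ₗ[ℝ] H} {E : V → EReal} {ω : ℝ} (hconv : ERealConvex (shifted j E ω))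
    {u : H} {uh vh : V} (huh : uh ∈ ellipticExt j E u) (hvh : j vh = u) :
    E uh ≤ E vh := by
  obtain ⟨hfin, hju, hslope⟩ := huh
  have hker : vh - uh ∈ LinearMap.ker j := by simp [hju, hvh]
  have hseg : ∀ t ∈ Set.Ioo (0 : ℝ) 1,
      E (uh + t • (vh - uh)) ≤ t * E (uh + (vh - uh)) + ((1 - t : ℝ) : EReal) * E uh := by
    intro t ht
    rw [show uh + t • (vh - uh) = t • vh + (1 - t) • uh by module, add_sub_cancel]
    exact hconv.le_convexComb_of_map_eq (hvh.trans hju.symm) ht.1.le ht.2.le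
  simpa using le_add_of_le_convexComb_of_liminf_slope_nonneg hfin.ne hseg (hslope _ hker)

theorem ellipticExt_energy_inf_general (j : V →ₗ[ℝ] H) (E : V → EReal)
    (ω : ℝ) (hconv : ERealConvex (shifted j E ω))
    (u : H)
    (uh : V) (huh : uh ∈ ellipticExt j E u) :
    E uh = ⨅ vh : {vh : V // j vh = u}, E (vh : V) ∧
      ∀ uh' ∈ ellipticExt j E u, E uh' = E uh :=
  ⟨le_antisymm (le_iInf fun vh => le_of_mem_ellipticExt hconv huh vh.2)
      (iInf_le_of_le ⟨uh, huh.2.1⟩ le_rfl),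
    fun _ huh' => le_antisymm (le_of_mem_ellipticExt hconv huh' huh.2.1)
      (le_of_mem_ellipticExt hconv huh huh'.2.1)⟩

/-- if `E` is `j`-semiconvex, then for every `u ∈ D(∂_j E)` and every elliptic
extension `û ∈ Ê_u` one has `E(û) = inf { E(v̂) : j(v̂) = u }`; in particular `E` is constant
on `Ê_u`. -/
theorem ellipticExt_energy_inf (j : V →ₗ[ℝ] H) (hj : Continuous j) (E : V → EReal)
    (ω : ℝ) (hconv : ERealConvex (shifted j E ω))
    (u : H) (hu : ∃ f : H, (u, f) ∈ jSubgradient j E)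
    (uh : V) (huh : uh ∈ ellipticExt j E u) :
    E uh = ⨅ vh : {vh : V // j vh = u}, E (vh : V) ∧
      ∀ uh' ∈ ellipticExt j E u, E uh' = E uh :=
  ellipticExt_energy_inf_general j E ω hconv u uh huh
end

section
/- Define E₀(u) := inf { E(û) : û ∈ V, j(û) = u } and E₁(u) := sup over open neighbourhoods U of u in H of inf { E(v̂) : j(v̂) ∈ U }, for u ∈ H. If E : V → ℝ∪{+∞} is convex, proper, lower semicontinuous and j-elliptic, then E₀ = E₁ on H. -/
open Filter Topology

variable {V : Type*} [AddCommGroup V] [Module ℝ V] [TopologicalSpace V]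
variable {H : Type*} [NormedAddCommGroup H] [InnerProductSpace ℝ H] [CompleteSpace H]

def CoerciveE (E : V → EReal) : Prop :=
  ∀ c : ℝ, IsCompact (closure {u : V | E u ≤ (c : EReal)})

/-- `E₀(u) = inf { E(û) : j(û) = u }`. -/
noncomputable def Ezero (j : V →ₗ[ℝ] H) (E : V → EReal) (u : H) : EReal :=
  ⨅ vh : {vh : V // j vh = u}, E (vh : V)

/-- `E₁(u) = sup over open neighbourhoods U of u of inf { E(v̂) : j(v̂) ∈ U }`. -/
noncomputable def Eone (j : V →ₗ[ℝ] H) (E : V → EReal) (u : H) : EReal :=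
  ⨆ U : {U : Set H // IsOpen U ∧ u ∈ U}, ⨅ vh : {vh : V // j vh ∈ (U : Set H)}, E (vh : V)

/-!
Fix `u` and a real `c > E₁(u)`. Every neighbourhood of `u` contains some `j v` with `E v < c`, so
the filter `comap j (𝓝 u) ⊓ 𝓟 {E < c}` is proper. Along it `‖j v‖ → ‖u‖`, so the shifted
functional `E + (ω/2)‖j ·‖²` is eventually below any real `y > c + (ω/2)‖u‖²`; coercivity then
yields a cluster point `v̂`, continuity of `j` gives `j v̂ = u`, and lower semicontinuity of the
shifted functional gives `E v̂ ≤ c`. Hence `E₀(u) ≤ E₁(u)`, and `E₁ ≤ E₀` is immediate.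
-/

theorem LowerSemicontinuous.le_of_clusterPt {X γ : Type*} [TopologicalSpace X] [LinearOrder γ]
    {f : X → γ} {F : Filter X} {x : X} {a : γ} (hf : LowerSemicontinuous f)
    (hx : ClusterPt x F) (ha : ∀ᶠ y in F, f y ≤ a) : f x ≤ a :=
  (hf.isClosed_preimage a).closure_subset (hx.mem_closure_of_mem _ ha)

theorem exists_clusterPt_of_eventually_le {X γ : Type*} [TopologicalSpace X] [LinearOrder γ]
    {f : X → γ} {F : Filter X} [F.NeBot] {a : γ} (hK : IsCompact (closure {x | f x ≤ a}))
    (ha : ∀ᶠ y in F, f y ≤ a) : ∃ x, ClusterPt x F :=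
  let ⟨x, _, hx⟩ := hK.exists_clusterPt (le_principal_iff.2 (mem_of_superset ha subset_closure))
  ⟨x, hx⟩

theorem ClusterPt.apply_eq_of_le_comap {X Y : Type*} [TopologicalSpace X] [TopologicalSpace Y]
    [T2Space Y] {g : X → Y} {F : Filter X} {x : X} {y : Y} (hx : ClusterPt x F)
    (hg : Continuous g) (hF : F ≤ comap g (𝓝 y)) : g x = y :=
  eq_of_nhds_neBot (hx.map hg.continuousAt (tendsto_comap.mono_left hF))

theorem frequently_lt_of_Eone_lt {V H : Type*} [AddCommGroup V] [Module ℝ V]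
    [NormedAddCommGroup H] [InnerProductSpace ℝ H] {j : V →ₗ[ℝ] H} {E : V → EReal} {u : H}
    {c : EReal} (h : Eone j E u < c) : ∃ᶠ v in comap j (𝓝 u), E v < c := by
  unfold Eone at h
  rw [Filter.frequently_iff]
  intro U hU
  obtain ⟨t, ht, htU⟩ := mem_comap.1 hU
  obtain ⟨W, hWt, hW, huW⟩ := mem_nhds_iff.1 ht
  have hW_lt : ⨅ v : {v : V // j v ∈ W}, E v < c :=
    (le_iSup (fun U : {U : Set H // IsOpen U ∧ u ∈ U} => ⨅ v : {v : V // j v ∈ (U : Set H)}, E v)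
      ⟨W, hW, huW⟩).trans_lt h
  obtain ⟨⟨v, hv⟩, hvc⟩ := iInf_lt_iff.1 hW_lt
  exact ⟨v, htU (hWt hv), hvc⟩

theorem eventually_shifted_lt {V H : Type*} [AddCommGroup V] [Module ℝ V]
    [NormedAddCommGroup H] [InnerProductSpace ℝ H] {j : V →ₗ[ℝ] H} {E : V → EReal} (ω : ℝ)
    {u : H} {c y : ℝ} (hy : c + ω / 2 * ‖u‖ ^ 2 < y) :
    ∀ᶠ v in comap j (𝓝 u) ⊓ 𝓟 {v | E v < c}, shifted j E ω v < y := by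
  have hcont : Continuous fun w : H => ω / 2 * ‖w‖ ^ 2 := by fun_prop
  have hnorm : ∀ᶠ v in comap j (𝓝 u), ω / 2 * ‖j v‖ ^ 2 < y - c :=
    ((hcont.tendsto u).comp tendsto_comap).eventually_lt_const (by linarith)
  filter_upwards [mem_inf_of_left hnorm, mem_inf_of_right (mem_principal_self _)]
    with v hv hEv
  calc shifted j E ω v < (c : EReal) + ((y - c : ℝ) : EReal) :=
        EReal.add_lt_add hEv (EReal.coe_lt_coe_iff.2 hv)
    _ = y := by rw [← EReal.coe_add, add_sub_cancel]

theorem exists_eq_and_le_of_Eone_lt {V H : Type*} [AddCommGroup V] [Module ℝ V]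
    [TopologicalSpace V] [NormedAddCommGroup H] [InnerProductSpace ℝ H] {j : V →ₗ[ℝ] H}
    {E : V → EReal} {ω : ℝ} (hj : Continuous j) (hlsc : LowerSemicontinuous (shifted j E ω))
    (hcoer : CoerciveE (shifted j E ω)) {u : H} {c : ℝ} (h : Eone j E u < c) :
    ∃ v, j v = u ∧ E v ≤ c := by
  set F := comap j (𝓝 u) ⊓ 𝓟 {v | E v < c}
  have : F.NeBot := frequently_iff_neBot.1 (frequently_lt_of_Eone_lt h)
  have hF : ∀ y : ℝ, c + ω / 2 * ‖u‖ ^ 2 < y → ∀ᶠ v in F, shifted j E ω v ≤ y :=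
    fun y hy => (eventually_shifted_lt ω hy).mono fun _ => le_of_lt
  obtain ⟨v, hv⟩ := exists_clusterPt_of_eventually_le (hcoer _) (hF _ (lt_add_one _))
  have hjv : j v = u := hv.apply_eq_of_le_comap hj inf_le_left
  have hS : shifted j E ω v ≤ ((c + ω / 2 * ‖u‖ ^ 2 : ℝ) : EReal) :=
    EReal.le_of_forall_lt_iff_le.1 fun y hy =>
      hlsc.le_of_clusterPt hv (hF y (EReal.coe_lt_coe_iff.1 hy))
  rw [shifted, hjv, EReal.coe_add] at hS
  exact ⟨v, hjv, (EReal.addLECancellable_coe _).add_le_add_iff_right.1 hS⟩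

theorem Ezero_le_Eone {V H : Type*} [AddCommGroup V] [Module ℝ V] [TopologicalSpace V]
    [NormedAddCommGroup H] [InnerProductSpace ℝ H] {j : V →ₗ[ℝ] H} {E : V → EReal} {ω : ℝ}
    (hj : Continuous j) (hlsc : LowerSemicontinuous (shifted j E ω))
    (hcoer : CoerciveE (shifted j E ω)) (u : H) : Ezero j E u ≤ Eone j E u :=
  EReal.le_of_forall_lt_iff_le.1 fun _ hc =>
    let ⟨v, hjv, hv⟩ := exists_eq_and_le_of_Eone_lt hj hlsc hcoer hc
    (iInf_le (fun w : {w : V // j w = u} => E w) ⟨v, hjv⟩).trans hv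

theorem Eone_le_Ezero {V H : Type*} [AddCommGroup V] [Module ℝ V]
    [NormedAddCommGroup H] [InnerProductSpace ℝ H] (j : V →ₗ[ℝ] H) (E : V → EReal) (u : H) :
    Eone j E u ≤ Ezero j E u := by
  unfold Eone Ezero
  exact iSup_le fun ⟨U, _, hu⟩ => le_iInf fun ⟨v, hv⟩ =>
    iInf_le (fun w : {w : V // j w ∈ U} => E w) ⟨v, hv ▸ hu⟩

theorem Ezero_eq_Eone_general (j : V →ₗ[ℝ] H) (hj : Continuous j) (E : V → EReal)
    (helliptic : ∃ ω : ℝ, 0 ≤ ω ∧ ERealConvex (shifted j E ω) ∧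
      LowerSemicontinuous (shifted j E ω) ∧ CoerciveE (shifted j E ω)) :
    Ezero j E = Eone j E := by
  obtain ⟨ω, -, -, hlsc, hcoer⟩ := helliptic
  funext u
  exact (Ezero_le_Eone hj hlsc hcoer u).antisymm (Eone_le_Ezero j E u)

/-- if `E` is convex, proper, lower semicontinuous and `j`-elliptic, then
`E₀ = E₁` on `H`. -/
theorem Ezero_eq_Eone (j : V →ₗ[ℝ] H) (hj : Continuous j) (E : V → EReal)
    (hconv : ERealConvex E) (hproper : ∃ u, E u < ⊤) (hlsc : LowerSemicontinuous E)
    (helliptic : ∃ ω : ℝ, 0 ≤ ω ∧ ERealConvex (shifted j E ω) ∧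
      LowerSemicontinuous (shifted j E ω) ∧ CoerciveE (shifted j E ω)) :
    Ezero j E = Eone j E :=
  Ezero_eq_Eone_general j hj E helliptic
end

section
/- Let E be convex, proper, lower semicontinuous and j-elliptic, and set E₀(u) = inf{E(û) : j(û) = u}. Then for every u ∈ H and every (v,f) ∈ ∂_j E one has E₀(u) ≥ ⟨f, u − v⟩ + E₀(v); that is, ∂_j E ⊆ ∂E₀, the classical subgradient of E₀ on H. -/
/-! For a convex `E`, the difference quotients `(E (v₀ + t • d) - E v₀) / t`, `0 < t ≤ 1`, are bounded
by `E (v₀ + d) - E v₀`. Applied at a representative `v₀` of `v` in the direction `d = w₀ - v₀`, where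
`j w₀ = u`, the `j`-subgradient inequality gives `⟨f, u - v⟩ ≤ E w₀ - E v₀`; taking the infimum over
`w₀` and bounding `E₀ v ≤ E v₀` gives the claim. -/

open Filter Topology

variable {V : Type*} [AddCommGroup V] [Module ℝ V] [TopologicalSpace V]
variable {H : Type*} [NormedAddCommGroup H] [InnerProductSpace ℝ H] [CompleteSpace H]

section Convex

variable {W : Type*} [AddCommGroup W] [Module ℝ W] {E : W → EReal}

theorem ERealConvex.diff_quotient_le (hconv : ERealConvex E) {u d : W} {a : ℝ} (ha : E u = a)
    {t : ℝ} (ht₀ : 0 < t) (ht₁ : t ≤ 1) :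
    (E (u + t • d) - E u) * ((t⁻¹ : ℝ) : EReal) ≤ E (u + d) - E u := by
  have hcvx := hconv (u + d) u t ht₀.le ht₁
  rw [show t • (u + d) + (1 - t) • u = u + t • d by module, ha] at hcvx
  rw [ha]
  generalize E (u + d) = y at hcvx
  induction y using EReal.rec with
  | bot =>
    rw [EReal.mul_bot_of_pos (by exact_mod_cast ht₀), EReal.bot_add, le_bot_iff] at hcvx
    rw [hcvx, EReal.bot_sub, EReal.bot_mul_of_pos (by exact_mod_cast inv_pos.2 ht₀)]
  | top => rw [EReal.top_sub_coe]; exact le_top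
  | coe b =>
    rw [← EReal.coe_mul, ← EReal.coe_mul, ← EReal.coe_add] at hcvx
    calc (E (u + t • d) - a) * ((t⁻¹ : ℝ) : EReal)
        ≤ ((t * b + (1 - t) * a - a : ℝ) : EReal) * ((t⁻¹ : ℝ) : EReal) := by
          rw [EReal.coe_sub]
          exact mul_le_mul_of_nonneg_right (EReal.sub_le_sub hcvx le_rfl)
            (EReal.coe_nonneg.2 (inv_nonneg.2 ht₀.le))
      _ = ((b - a : ℝ) : EReal) := by
          rw [← EReal.coe_mul]; congr 1; field_simp; ring

theorem ERealConvex.liminf_diff_quotient_le (hconv : ERealConvex E) {u : W} {a : ℝ}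
    (ha : E u = a) (d : W) :
    liminf (fun t : ℝ => (E (u + t • d) - E u) * ((t⁻¹ : ℝ) : EReal)) (𝓝[>] 0) ≤
      E (u + d) - E u := by
  refine liminf_le_of_frequently_le' (Eventually.frequently ?_)
  filter_upwards [Ioo_mem_nhdsGT_of_mem ⟨le_rfl, one_pos⟩] with t ht
  exact hconv.diff_quotient_le ha ht.1 ht.2.le

end Convex

theorem jSubgradient_subset_subgradient_Ezero_general (j : V →ₗ[ℝ] H)
    (E : V → EReal) (hconv : ERealConvex E) :
    ∀ u : H, ∀ v f : H, (v, f) ∈ jSubgradient j E →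
      ((inner ℝ f (u - v) : ℝ) : EReal) + Ezero j E v ≤ Ezero j E u := by
  rintro u _ f ⟨v₀, hv₀_top, rfl, hslope⟩
  refine le_iInf fun ⟨w₀, hw₀⟩ => ?_
  have hEzero : Ezero j E (j v₀) ≤ E v₀ := iInf_le (fun w : {w // j w = j v₀} => E w) ⟨v₀, rfl⟩
  rcases eq_or_ne (E v₀) ⊥ with hbot | hbot
  · rw [hbot, le_bot_iff] at hEzero
    rw [hEzero, EReal.add_bot]
    exact bot_le
  obtain ⟨a, ha⟩ : ∃ a : ℝ, E v₀ = a := ⟨_, (EReal.coe_toReal hv₀_top.ne hbot).symm⟩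
  have hinner : ((inner ℝ f (u - j v₀) : ℝ) : EReal) ≤ E w₀ - a := by
    have := (hslope (w₀ - v₀)).trans (hconv.liminf_diff_quotient_le ha (w₀ - v₀))
    rwa [map_sub, hw₀, add_sub_cancel, ha] at this
  calc _ ≤ ((inner ℝ f (u - j v₀) : ℝ) : EReal) + a := add_le_add_right (ha ▸ hEzero) _
    _ ≤ E w₀ :=
      (EReal.le_sub_iff_add_le (.inl (EReal.coe_ne_bot a)) (.inl (EReal.coe_ne_top a))).1 hinner

/-- for `E` convex, proper, lower semicontinuous and `j`-elliptic, one has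
`E₀(u) ≥ ⟨f, u − v⟩ + E₀(v)` for all `u ∈ H` and `(v,f) ∈ ∂_j E`; that is,
`∂_j E ⊆ ∂ E₀`. -/
theorem jSubgradient_subset_subgradient_Ezero (j : V →ₗ[ℝ] H) (hj : Continuous j)
    (E : V → EReal) (hconv : ERealConvex E) (hproper : ∃ u, E u < ⊤)
    (hlsc : LowerSemicontinuous E)
    (helliptic : ∃ ω : ℝ, 0 ≤ ω ∧ ERealConvex (shifted j E ω) ∧ CoerciveE (shifted j E ω)) :
    ∀ u : H, ∀ v f : H, (v, f) ∈ jSubgradient j E →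
      ((inner ℝ f (u - v) : ℝ) : EReal) + Ezero j E v ≤ Ezero j E u :=
  jSubgradient_subset_subgradient_Ezero_general j E hconv
end
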